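/- Let M ≥ 1 and let (X_j)_{j=1}^M and (X′_j)_{j=1}^M be mutually independent random variables, where X_j is exponentially distributed with mean λ_j > 0 and X′_j is exponentially distributed with mean λ′_j > 0. Let a, u > 0. Then lim_{ρ → ∞} ℙ( max_{1≤j≤M} ρ·X_j/(a·ρ·X′_j + 1) > u ) = 1 − ∏_{j=1}^M ( a·λ′_j·u/(λ_j + a·λ′_j·u) ). -/

import Mathlib

/-!
For `ρ > 0` and `X'ⱼ ≥ 0` the `j`-th event reads `Xⱼ > a u X'ⱼ + u / ρ`. If `X` and `X'` are
independent exponentials with rates `r` and `r'`, conditioning on `X'` and using the Laplace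
transform of the exponential law gives
`ℙ(X > b X' + c) = e^{-r c} 𝔼[e^{-r b X'}] = e^{-r c} r' / (r b + r')`.
The pairs `(Xⱼ, X'ⱼ)` are independent, so the probability that no event occurs is the product of
the complementary probabilities, and `c = u / ρ → 0` gives the limit.
-/

open MeasureTheory ProbabilityTheory Real Filter

/-- A real random variable `X` is exponentially distributed with mean `lam > 0` if its law has
density `(1/lam) * exp (-x/lam)` on `[0, ∞)` and `0` on `(-∞, 0)`. -/
def HasExpLaw {Ω : Type*} [MeasurableSpace Ω] (P : Measure Ω) (X : Ω → ℝ) (lam : ℝ) : Prop :=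
  Measurable X ∧
    P.map X = MeasureTheory.volume.withDensity
      (fun x => ENNReal.ofReal (if 0 ≤ x then (1 / lam) * Real.exp (-x / lam) else 0))

open Set

lemma MeasureTheory.Measure.pi_real_setOf_exists_mem {ι α : Type*} [Fintype ι] [MeasurableSpace α]
    {μ : ι → Measure α} [∀ i, IsProbabilityMeasure (μ i)] {S : ι → Set α}
    (hS : ∀ i, MeasurableSet (S i)) :
    (Measure.pi μ).real {x | ∃ i, x i ∈ S i} = 1 - ∏ i, (1 - (μ i).real (S i)) := by
  have hcompl : {x : ι → α | ∃ i, x i ∈ S i} = (univ.pi fun i => (S i)ᶜ)ᶜ := by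
    ext x; simp
  rw [hcompl, probReal_compl_eq_one_sub (.univ_pi fun i => (hS i).compl), measureReal_def,
    Measure.pi_pi, ENNReal.toReal_prod]
  simp_rw [← measureReal_def, probReal_compl_eq_one_sub (hS _)]

namespace ProbabilityTheory

lemma measurable_exponentialPDF (r : ℝ) : Measurable (exponentialPDF r) :=
  (measurable_exponentialPDFReal r).ennreal_ofReal

lemma expMeasure_Iio_zero (r : ℝ) : expMeasure r (Iio 0) = 0 := by
  rw [expMeasure, gammaMeasure, withDensity_apply _ measurableSet_Iio]
  exact lintegral_exponentialPDF_of_nonpos le_rfl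

lemma ae_nonneg_expMeasure (r : ℝ) : ∀ᵐ x ∂expMeasure r, 0 ≤ x := by
  rw [ae_iff]
  simp only [not_le]
  exact expMeasure_Iio_zero r

lemma expMeasure_Ioi {r t : ℝ} (hr : 0 < r) (ht : 0 ≤ t) :
    expMeasure r (Ioi t) = ENNReal.ofReal (exp (-(r * t))) := by
  have := isProbabilityMeasure_expMeasure hr
  rw [← compl_Iic, prob_compl_eq_one_sub measurableSet_Iic, ← ofReal_cdf, cdf_expMeasure_eq hr,
    if_pos ht, ← ENNReal.ofReal_one,
    ← ENNReal.ofReal_sub _ (sub_nonneg.2 (exp_le_one_iff.2 (neg_nonpos.2 (mul_nonneg hr.le ht))))]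
  ring_nf

lemma exponentialPDF_mul_exp_neg_mul {r s : ℝ} (hr : 0 ≤ r) (hrs : 0 < s + r) (y : ℝ) :
    exponentialPDF r y * ENNReal.ofReal (exp (-(s * y)))
      = ENNReal.ofReal (r / (s + r)) * exponentialPDF (s + r) y := by
  rw [exponentialPDF_eq, exponentialPDF_eq, ← ENNReal.ofReal_mul' (exp_pos _).le,
    ← ENNReal.ofReal_mul (by positivity)]
  congr 1
  split_ifs
  · rw [mul_assoc, ← exp_add]
    field_simp
    ring_nf
  · simp

lemma lintegral_exp_neg_mul_expMeasure {r s : ℝ} (hr : 0 < r) (hs : 0 ≤ s) :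
    ∫⁻ y, ENNReal.ofReal (exp (-(s * y))) ∂expMeasure r = ENNReal.ofReal (r / (s + r)) := by
  have hrs : 0 < s + r := by positivity
  have hdens : expMeasure r = volume.withDensity (exponentialPDF r) := rfl
  rw [hdens, lintegral_withDensity_eq_lintegral_mul _ (measurable_exponentialPDF r)
    (by fun_prop)]
  simp only [Pi.mul_apply, exponentialPDF_mul_exp_neg_mul hr.le hrs]
  rw [lintegral_const_mul _ (measurable_exponentialPDF _), lintegral_exponentialPDF_eq_one hrs,
    mul_one]

lemma expMeasure_prod_setOf_lt {r r' b c : ℝ} (hr : 0 < r) (hr' : 0 < r') (hb : 0 ≤ b)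
    (hc : 0 ≤ c) :
    (expMeasure r).prod (expMeasure r') {p | b * p.2 + c < p.1}
      = ENNReal.ofReal (exp (-(r * c)) * (r' / (r * b + r'))) := by
  have := isProbabilityMeasure_expMeasure hr
  have := isProbabilityMeasure_expMeasure hr'
  rw [Measure.prod_apply_symm (measurableSet_lt (by fun_prop) measurable_fst)]
  have hslice : (fun y => expMeasure r ((fun x => (x, y)) ⁻¹' {p : ℝ × ℝ | b * p.2 + c < p.1}))
      =ᵐ[expMeasure r'] fun y =>
        ENNReal.ofReal (exp (-(r * c))) * ENNReal.ofReal (exp (-(r * b * y))) := by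
    filter_upwards [ae_nonneg_expMeasure r'] with y hy
    rw [← ENNReal.ofReal_mul (exp_pos _).le, ← exp_add,
      show -(r * c) + -(r * b * y) = -(r * (b * y + c)) by ring]
    exact expMeasure_Ioi (t := b * y + c) hr (by positivity)
  rw [lintegral_congr_ae hslice, lintegral_const_mul _ (by fun_prop),
    lintegral_exp_neg_mul_expMeasure hr' (by positivity), ← ENNReal.ofReal_mul (exp_pos _).le]

lemma iIndepFun.map_prodMk_eq_pi {Ω ι α : Type*} [MeasurableSpace Ω] [Fintype ι]
    [MeasurableSpace α] {P : Measure Ω} [IsProbabilityMeasure P] {X Y : ι → Ω → α}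
    (hX : ∀ i, Measurable (X i)) (hY : ∀ i, Measurable (Y i))
    (h : iIndepFun (Sum.elim X Y) P) :
    P.map (fun ω i => (X i ω, Y i ω))
      = Measure.pi fun i => (P.map (X i)).prod (P.map (Y i)) := by
  have hXY : ∀ k, Measurable (Sum.elim X Y k) := fun k => by cases k <;> simp [hX, hY]
  have := fun k => Measure.isProbabilityMeasure_map (μ := P) (hXY k).aemeasurable
  let e := (MeasurableEquiv.sumPiEquivProdPi fun _ : ι ⊕ ι => α).trans
    (MeasurableEquiv.arrowProdEquivProdArrow α α ι).symm
  have he : (fun ω i => (X i ω, Y i ω)) = e ∘ fun ω k => Sum.elim X Y k ω := rfl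
  rw [he, ← Measure.map_map e.measurable (measurable_pi_lambda _ hXY),
    h.map_fun_eq_pi_map fun k => (hXY k).aemeasurable]
  exact ((measurePreserving_sumPiEquivProdPi _).trans
    (measurePreserving_arrowProdEquivProdArrow α α ι _ _).symm).map_eq

end ProbabilityTheory

lemma HasExpLaw.map_eq_expMeasure {Ω : Type*} [MeasurableSpace Ω] {P : Measure Ω} {X : Ω → ℝ}
    {lam : ℝ} (h : HasExpLaw P X lam) : P.map X = expMeasure lam⁻¹ := by
  rw [h.2]
  change _ = volume.withDensity (exponentialPDF lam⁻¹)
  congr with x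
  rw [exponentialPDF_eq]
  ring_nf

lemma lt_mul_div_mul_add_one_iff {a u ρ x y : ℝ} (ha : 0 ≤ a) (hρ : 0 < ρ) (hy : 0 ≤ y) :
    u < ρ * x / (a * ρ * y + 1) ↔ a * u * y + u / ρ < x := by
  rw [lt_div_iff₀ (by positivity), show u * (a * ρ * y + 1) = ρ * (a * u * y + u / ρ) by
    field_simp, mul_lt_mul_iff_right₀ hρ]

lemma expMeasure_prod_real_intercept {r r' a u ρ : ℝ} (hr : 0 < r) (hr' : 0 < r') (ha : 0 ≤ a)
    (hu : 0 ≤ u) (hρ : 0 < ρ) :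
    ((expMeasure r).prod (expMeasure r')).real {p | ρ * p.1 / (a * ρ * p.2 + 1) > u}
      = exp (-(r * (u / ρ))) * (r' / (r * (a * u) + r')) := by
  have hae : {p : ℝ × ℝ | ρ * p.1 / (a * ρ * p.2 + 1) > u}
      =ᵐ[(expMeasure r).prod (expMeasure r')] {p | a * u * p.2 + u / ρ < p.1} := by
    filter_upwards [Measure.quasiMeasurePreserving_snd.ae (ae_nonneg_expMeasure r')] with p hp
    exact propext (lt_mul_div_mul_add_one_iff ha hρ hp)
  rw [measureReal_congr hae, measureReal_def,
    expMeasure_prod_setOf_lt hr hr' (by positivity) (by positivity),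
    ENNReal.toReal_ofReal (by positivity)]

lemma measureReal_exists_intercept {Ω ι : Type*} [MeasurableSpace Ω] [Fintype ι]
    {P : Measure Ω} [IsProbabilityMeasure P] {r r' : ι → ℝ} (hr : ∀ j, 0 < r j)
    (hr' : ∀ j, 0 < r' j) {X X' : ι → Ω → ℝ} (hmeas : Measurable fun ω j => (X j ω, X' j ω))
    (hlaw : P.map (fun ω j => (X j ω, X' j ω))
      = Measure.pi fun j => (expMeasure (r j)).prod (expMeasure (r' j)))
    {a u ρ : ℝ} (ha : 0 ≤ a) (hu : 0 ≤ u) (hρ : 0 < ρ) :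
    P.real {ω | ∃ j, ρ * X j ω / (a * ρ * X' j ω + 1) > u}
      = 1 - ∏ j, (1 - exp (-(r j * (u / ρ))) * (r' j / (r j * (a * u) + r' j))) := by
  have := fun j => isProbabilityMeasure_expMeasure (hr j)
  have := fun j => isProbabilityMeasure_expMeasure (hr' j)
  set E : Set (ℝ × ℝ) := {p | ρ * p.1 / (a * ρ * p.2 + 1) > u}
  have hE : MeasurableSet E := measurableSet_lt measurable_const (by fun_prop)
  have hEx : MeasurableSet {x : ι → ℝ × ℝ | ∃ j, x j ∈ E} := by
    rw [ofPred_exists]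
    exact .iUnion fun j => measurable_pi_apply j hE
  rw [show {ω | ∃ j, ρ * X j ω / (a * ρ * X' j ω + 1) > u}
      = (fun ω j => (X j ω, X' j ω)) ⁻¹' {x | ∃ j, x j ∈ E} from rfl,
    ← map_measureReal_apply hmeas hEx, hlaw, Measure.pi_real_setOf_exists_mem fun _ => hE]
  simp only [E, expMeasure_prod_real_intercept (hr _) (hr' _) ha hu hρ]

lemma tendsto_one_sub_prod_one_sub_exp_mul {ι : Type*} [Fintype ι] (r K : ι → ℝ) (u : ℝ) :
    Tendsto (fun ρ : ℝ => 1 - ∏ j, (1 - exp (-(r j * (u / ρ))) * K j)) atTop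
      (nhds (1 - ∏ j, (1 - K j))) := by
  have hc : Tendsto (fun ρ : ℝ => u / ρ) atTop (nhds 0) := tendsto_const_nhds.div_atTop tendsto_id
  simpa using tendsto_const_nhds.sub <| tendsto_finsetProd _ fun j _ =>
    ((hc.const_mul (r j)).neg.rexp.mul_const (K j)).const_sub 1

theorem stmt_14_general {Ω : Type*} [MeasurableSpace Ω] (P : Measure Ω) [IsProbabilityMeasure P]
    (M : ℕ) (lam lam' : Fin M → ℝ)
    (hlam : ∀ j, 0 < lam j) (hlam' : ∀ j, 0 < lam' j)
    (a u : ℝ) (ha : 0 < a) (hu : 0 < u)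
    (X X' : Fin M → Ω → ℝ)
    (hX : ∀ j, HasExpLaw P (X j) (lam j)) (hX' : ∀ j, HasExpLaw P (X' j) (lam' j))
    (hindep : iIndepFun (Sum.elim X X') P) :
    Tendsto
      (fun ρ : ℝ =>
        (P {ω | ∃ j : Fin M, ρ * X j ω / (a * ρ * X' j ω + 1) > u}).toReal)
      atTop
      (nhds (1 - ∏ j : Fin M, (a * lam' j * u / (lam j + a * lam' j * u)))) := by
  have hlaw := hindep.map_prodMk_eq_pi (fun j => (hX j).1) (fun j => (hX' j).1)
  simp only [(hX _).map_eq_expMeasure, (hX' _).map_eq_expMeasure] at hlaw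
  have hlimit : ∀ j, 1 - (lam' j)⁻¹ / ((lam j)⁻¹ * (a * u) + (lam' j)⁻¹)
      = a * lam' j * u / (lam j + a * lam' j * u) := by
    intro j
    have := hlam j
    have := hlam' j
    field_simp
    ring
  simp_rw [← hlimit]
  refine (tendsto_one_sub_prod_one_sub_exp_mul (fun j => (lam j)⁻¹) _ u).congr' ?_
  filter_upwards [eventually_gt_atTop 0] with ρ hρ
  rw [← measureReal_def, measureReal_exists_intercept (fun j => inv_pos.2 (hlam j))
    (fun j => inv_pos.2 (hlam' j)) (measurable_pi_lambda _ fun j => (hX j).1.prodMk (hX' j).1)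
    hlaw ha.le hu.le hρ]

theorem stmt_14 {Ω : Type*} [MeasurableSpace Ω] (P : Measure Ω) [IsProbabilityMeasure P]
    (M : ℕ) (hM : 1 ≤ M) (lam lam' : Fin M → ℝ)
    (hlam : ∀ j, 0 < lam j) (hlam' : ∀ j, 0 < lam' j)
    (a u : ℝ) (ha : 0 < a) (hu : 0 < u)
    (X X' : Fin M → Ω → ℝ)
    (hX : ∀ j, HasExpLaw P (X j) (lam j)) (hX' : ∀ j, HasExpLaw P (X' j) (lam' j))
    (hindep : iIndepFun (Sum.elim X X') P) :
    Tendsto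
      (fun ρ : ℝ =>
        (P {ω | ∃ j : Fin M, ρ * X j ω / (a * ρ * X' j ω + 1) > u}).toReal)
      atTop
      (nhds (1 - ∏ j : Fin M, (a * lam' j * u / (lam j + a * lam' j * u)))) :=
  stmt_14_general P M lam lam' hlam hlam' a u ha hu X X' hX hX' hindep
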